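/- Let Q̂ be a symmetric matrix whose eigenvalue decomposition is Q̂ = VΣVᵀ with Σ having at least one negative eigenvalue, and define Q̂⁺ = V max(Σ,0) Vᵀ / tr(max(Σ,0)). If tr(Q̂) = 1, then for every x ∈ ℝ^D with Q̂x ≠ 0, ‖Q̂⁺ x‖ < ‖Q̂ x‖; in particular F(Q̂⁺) < F(Q̂) whenever F(Q̂) > 0. -/
import Mathlib


open Matrix Finset

/-- Euclidean norm of a vector in `ℝ^D`. -/
noncomputable def euclNorm {D : ℕ} (v : Fin D → ℝ) : ℝ := Real.sqrt (∑ j, v j ^ 2)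

lemma euclNorm_nonneg {D : ℕ} (v : Fin D → ℝ) : 0 ≤ euclNorm v := Real.sqrt_nonneg _

lemma euclNorm_pos {D : ℕ} {v : Fin D → ℝ} (hv : v ≠ 0) : 0 < euclNorm v := by
  apply Real.sqrt_pos.mpr
  obtain ⟨j, hj⟩ := Function.ne_iff.mp hv
  exact Finset.sum_pos' (fun i _ => sq_nonneg _)
    ⟨j, Finset.mem_univ j, by
      have hj' : v j ≠ 0 := by simpa using hj
      positivity⟩

lemma euclNorm_smul {D : ℕ} {c : ℝ} (hc : 0 ≤ c) (v : Fin D → ℝ) :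
    euclNorm (c • v) = c * euclNorm v := by
  unfold euclNorm
  have : ∑ j, (c • v) j ^ 2 = c ^ 2 * ∑ j, v j ^ 2 := by
    rw [Finset.mul_sum]; congr 1; ext j; simp [mul_pow]
  rw [this, Real.sqrt_mul (sq_nonneg c), Real.sqrt_sq hc]

lemma euclNorm_orth {D : ℕ} (V : Matrix (Fin D) (Fin D) ℝ) (hV : Vᵀ * V = 1)
    (y : Fin D → ℝ) : euclNorm (V.mulVec y) = euclNorm y := by
  unfold euclNorm
  congr 1
  have h : ∀ u : Fin D → ℝ, ∑ j, u j ^ 2 = u ⬝ᵥ u := by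
    intro u; simp [dotProduct, sq]
  rw [h, h, Matrix.dotProduct_mulVec, ← Matrix.mulVec_transpose,
    Matrix.mulVec_mulVec, hV, Matrix.one_mulVec]

/-- Let `Q̂ = V Σ Vᵀ` with `V` orthogonal, `tr Q̂ = 1` and `Σ` having a negative entry, and
let `Q̂⁺ = V max(Σ,0) Vᵀ / tr(max(Σ,0))`. Then `‖Q̂⁺ x‖ < ‖Q̂ x‖` whenever `Q̂ x ≠ 0`;
in particular `F(Q̂⁺) < F(Q̂)` whenever `F(Q̂) > 0`. -/
theorem stmt15 {D N : ℕ} (x : Fin N → Fin D → ℝ)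
    (V : Matrix (Fin D) (Fin D) ℝ) (hV : Vᵀ * V = 1)
    (d : Fin D → ℝ) (Qh : Matrix (Fin D) (Fin D) ℝ)
    (hQh : Qh = V * Matrix.diagonal d * Vᵀ)
    (hneg : ∃ i, d i < 0) (htr : Qh.trace = 1) :
    (∀ v : Fin D → ℝ, Qh.mulVec v ≠ 0 →
      euclNorm ((((∑ i, max (d i) 0)⁻¹ •
          (V * Matrix.diagonal (fun i => max (d i) 0) * Vᵀ))).mulVec v) <
        euclNorm (Qh.mulVec v)) ∧
    (0 < ∑ i, euclNorm (Qh.mulVec (x i)) →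
      ∑ i, euclNorm ((((∑ j, max (d j) 0)⁻¹ •
          (V * Matrix.diagonal (fun j => max (d j) 0) * Vᵀ))).mulVec (x i)) <
        ∑ i, euclNorm (Qh.mulVec (x i))) := by
  set t : ℝ := ∑ i, max (d i) 0 with ht
  set M : Matrix (Fin D) (Fin D) ℝ :=
    V * Matrix.diagonal (fun i => max (d i) 0) * Vᵀ with hM
  have htrd : ∑ i, d i = 1 := by
    have h := htr
    rw [hQh, Matrix.trace_mul_cycle, hV, Matrix.one_mul, Matrix.trace_diagonal] at h
    exact h
  have ht1 : 1 < t := by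
    rw [← htrd]
    obtain ⟨i0, hi0⟩ := hneg
    exact Finset.sum_lt_sum (fun i _ => le_max_left _ _)
      ⟨i0, Finset.mem_univ i0, lt_max_iff.mpr (Or.inr hi0)⟩
  have ht0 : (0:ℝ) < t := zero_lt_one.trans ht1
  have key : ∀ v : Fin D → ℝ, euclNorm (M.mulVec v) ≤ euclNorm (Qh.mulVec v) := by
    intro v
    have h1 : M.mulVec v = V.mulVec
        ((Matrix.diagonal (fun i => max (d i) 0)).mulVec (Vᵀ.mulVec v)) := by
      rw [hM, ← Matrix.mulVec_mulVec, ← Matrix.mulVec_mulVec]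
    have h2 : Qh.mulVec v = V.mulVec
        ((Matrix.diagonal d).mulVec (Vᵀ.mulVec v)) := by
      rw [hQh, ← Matrix.mulVec_mulVec, ← Matrix.mulVec_mulVec]
    rw [h1, h2, euclNorm_orth V hV, euclNorm_orth V hV]
    unfold euclNorm
    apply Real.sqrt_le_sqrt
    apply Finset.sum_le_sum
    intro j _
    simp only [Matrix.mulVec_diagonal, mul_pow]
    apply mul_le_mul_of_nonneg_right _ (sq_nonneg _)
    rcases le_or_gt 0 (d j) with h | h
    · rw [max_eq_left h]
    · rw [max_eq_right h.le]
      simpa using sq_nonneg (d j)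
  have hle : ∀ v : Fin D → ℝ,
      euclNorm ((t⁻¹ • M).mulVec v) ≤ t⁻¹ * euclNorm (Qh.mulVec v) := by
    intro v
    rw [Matrix.smul_mulVec, euclNorm_smul (inv_nonneg.mpr ht0.le)]
    exact mul_le_mul_of_nonneg_left (key v) (inv_nonneg.mpr ht0.le)
  have hstrict : ∀ v : Fin D → ℝ, Qh.mulVec v ≠ 0 →
      euclNorm ((t⁻¹ • M).mulVec v) < euclNorm (Qh.mulVec v) := by
    intro v hv
    have hpos : 0 < euclNorm (Qh.mulVec v) := euclNorm_pos hv
    calc euclNorm ((t⁻¹ • M).mulVec v) ≤ t⁻¹ * euclNorm (Qh.mulVec v) := hle v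
      _ < 1 * euclNorm (Qh.mulVec v) := by
          apply mul_lt_mul_of_pos_right _ hpos
          exact inv_lt_one_of_one_lt₀ ht1
      _ = euclNorm (Qh.mulVec v) := one_mul _
  refine ⟨hstrict, ?_⟩
  intro hsum
  have hex : ∃ i : Fin N, Qh.mulVec (x i) ≠ 0 := by
    by_contra hall
    push_neg at hall
    have : ∑ i, euclNorm (Qh.mulVec (x i)) = 0 := by
      apply Finset.sum_eq_zero
      intro i _
      rw [hall i]
      simp [euclNorm]
    linarith
  obtain ⟨i0, hi0⟩ := hex
  apply Finset.sum_lt_sum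
  · intro i _
    calc euclNorm ((t⁻¹ • M).mulVec (x i)) ≤ t⁻¹ * euclNorm (Qh.mulVec (x i)) := hle _
      _ ≤ 1 * euclNorm (Qh.mulVec (x i)) := by
          apply mul_le_mul_of_nonneg_right _ (euclNorm_nonneg _)
          exact (inv_lt_one_of_one_lt₀ ht1).le
      _ = _ := one_mul _
  · exact ⟨i0, Finset.mem_univ i0, hstrict (x i0) hi0⟩
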